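/- arXiv:1808.01071 — 3 statements merged into one kernel-verified Lean document; each statement's English description precedes it below -/
import Mathlib

section
/- The previous encoding restricted to p-strings over Π only is injective up to renaming: for p-strings X and Y of equal length, prev(X) = prev(Y) implies that the relation {(X[i], Y[i]) : 1 ≤ i ≤ |X|} is a partial bijection (i.e., X[i] = X[j] if and only if Y[i] = Y[j] for all i, j). -/
open List

variable {α : Type} [DecidableEq α]

/-- The previous encoding entry at (0-based) position `i` of a p-string `S`,
over static alphabet `Sig`. -/
def prevEncAt (Sig : Set α) [DecidablePred (· ∈ Sig)] (S : List α) (i : ℕ) : α ⊕ ℕ :=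
  match S[i]? with
  | none => Sum.inr 0
  | some c =>
    if c ∈ Sig then Sum.inl c
    else if (List.range i).any (fun j => decide (S[j]? = some c)) then
      Sum.inr (i - Nat.findGreatest (fun j => S[j]? = some c) (i - 1))
    else Sum.inr 0

/-- The previous encoding of a p-string `S`. -/
def prevEnc (Sig : Set α) [DecidablePred (· ∈ Sig)] (S : List α) : List (α ⊕ ℕ) :=
  (List.range S.length).map (prevEncAt Sig S)

/-- Two p-strings parameterized match: equal length and a bijection on characters
fixing the static alphabet pointwise maps one onto the other. -/
def PMatch (Sig : Set α) (X Y : List α) : Prop :=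
  X.length = Y.length ∧ ∃ f : α ≃ α, (∀ a ∈ Sig, f a = a) ∧ X.map f = Y

/-- Length of the shortest prefix of `S` not yet a node of `N`
(defaults to `S.length` if all prefixes are nodes). -/
def insLen {β : Type} [DecidableEq β] (N : Finset (List β)) (S : List β) : ℕ :=
  (((List.range (S.length + 1)).filter (fun m => decide (S.take m ∉ N))).head?).getD S.length

/-- The node set of the sequence hash tree of a sequence of strings,
built incrementally: each step inserts the shortest prefix of the current
string that is not yet a node. -/
def SHTNodes {β : Type} [DecidableEq β] (L : List (List β)) : Finset (List β) :=
  L.foldl (fun N S => insert (S.take (insLen N S)) N) ∅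

/-- The sequence ⟨ε, prev(T[n..]), ..., prev(T[1..])⟩ of previous-encoded
suffixes of `T` in increasing length order. -/
def pphSeq (Sig : Set α) [DecidablePred (· ∈ Sig)] (T : List α) : List (List (α ⊕ ℕ)) :=
  [] :: (List.range T.length).map (fun k => prevEnc Sig (T.drop (T.length - 1 - k)))

/-- The node set of the parameterized position heap `PPH(T)`. -/
def pphNodes (Sig : Set α) [DecidablePred (· ∈ Sig)] (T : List α) : Finset (List (α ⊕ ℕ)) :=
  SHTNodes (pphSeq Sig T)

/-- `a ∈ Σ ∪ {0}` as a character of a previous encoding. -/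
def StaticOrZero (Sig : Set α) (a : α ⊕ ℕ) : Prop :=
  (∃ c ∈ Sig, a = Sum.inl c) ∨ a = Sum.inr 0

/-- Reversed suffix link `rslink(a, v) = u` in a position heap with node set `N`
for a text of length `n`. -/
def RSLink (Sig : Set α) (n : ℕ) (N : Finset (List (α ⊕ ℕ)))
    (a : α ⊕ ℕ) (v u : List (α ⊕ ℕ)) : Prop :=
  v ∈ N ∧ u ∈ N ∧
    ((StaticOrZero Sig a ∧ u = a :: v) ∨
     (∃ d : ℕ, a = Sum.inr d ∧ 1 ≤ d ∧ d ≤ n - 1 ∧ v[d - 1]? = some (Sum.inr 0) ∧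
       u = Sum.inr 0 :: (v.take (d - 1) ++ [Sum.inr d] ++ v.drop d)))

/-! Over a parameter alphabet, `prev(S)[j]` is `0` at a first occurrence and otherwise the
distance `j - p` to the previous occurrence `p` of `S[j]`. Equal encodings therefore give `X` and
`Y` the same previous-occurrence links, and for `i < j` we have `S[i] = S[j]` exactly when `i` is
reached from `j` along these links (strong induction on `j`). -/

section PrevEnc

variable {Sig : Set α} [DecidablePred (· ∈ Sig)] {S X Y : List α} {c : α} {i j : ℕ}

theorem prevEncAt_eq_inr_sub_of_getElem?_eq (hj : S[j]? = some c) (hc : c ∉ Sig) (hij : i < j)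
    (hi : S[i]? = some c) :
    ∃ p, i ≤ p ∧ p < j ∧ S[p]? = some c ∧ prevEncAt Sig S j = .inr (j - p) := by
  refine ⟨Nat.findGreatest (fun k => S[k]? = some c) (j - 1),
    Nat.le_findGreatest (show i ≤ j - 1 by omega) hi, ?_,
    Nat.findGreatest_spec (P := fun k => S[k]? = some c) (show i ≤ j - 1 by omega) hi, ?_⟩
  · have := Nat.findGreatest_le (P := fun k => S[k]? = some c) (j - 1)
    omega
  · have : (List.range j).any (fun k => decide (S[k]? = some c)) = true := by
      simpa [List.any_eq_true] using ⟨i, hij, hi⟩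
    simp [prevEncAt, hj, hc, this]

theorem getElem?_sub_of_prevEncAt_eq_inr (hj : S[j]? = some c) (hc : c ∉ Sig) {d : ℕ}
    (hd : prevEncAt Sig S j = .inr d) (hd0 : 0 < d) : S[j - d]? = some c := by
  by_cases hprev : ∃ i < j, S[i]? = some c
  · obtain ⟨i, hij, hi⟩ := hprev
    obtain ⟨p, -, hpj, hp, hdp⟩ := prevEncAt_eq_inr_sub_of_getElem?_eq hj hc hij hi
    obtain rfl : d = j - p := Sum.inr.inj (hd.symm.trans hdp)
    rwa [Nat.sub_sub_self hpj.le]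
  · have : (List.range j).any (fun k => decide (S[k]? = some c)) = false := by
      simpa [List.any_eq_true] using hprev
    simp [prevEncAt, hj, hc, this] at hd
    omega

theorem length_prevEnc : (prevEnc Sig S).length = S.length := by
  simp [prevEnc]

theorem prevEncAt_eq_of_prevEnc_eq (h : prevEnc Sig X = prevEnc Sig Y)
    (hj : j < X.length) : prevEncAt Sig X j = prevEncAt Sig Y j := by
  have hY : j < Y.length := by rwa [← length_prevEnc (Sig := Sig), ← h, length_prevEnc]
  simpa [prevEnc, hj, hY] using congrArg (·[j]?) h

theorem getElem?_eq_of_prevEnc_eq (hX : ∀ c ∈ X, c ∉ Sig) (hY : ∀ c ∈ Y, c ∉ Sig)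
    (h : prevEnc Sig X = prevEnc Sig Y) (hij : i ≤ j) (hXij : X[i]? = X[j]?) :
    Y[i]? = Y[j]? := by
  have hlen : X.length = Y.length := by
    rw [← length_prevEnc (Sig := Sig), h, length_prevEnc]
  induction j using Nat.strong_induction_on generalizing i with
  | _ j ih =>
    cases hxj : X[j]? with
    | none =>
      rw [hxj, getElem?_eq_none_iff] at hXij
      rw [getElem?_eq_none_iff] at hxj
      rw [getElem?_eq_none (by omega), getElem?_eq_none (by omega)]
    | some c =>
      rcases hij.eq_or_lt with rfl | hij
      · rfl
      have hjX : j < X.length := (List.getElem?_eq_some_iff.mp hxj).1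
      obtain ⟨p, hip, hpj, hXp, hencX⟩ := prevEncAt_eq_inr_sub_of_getElem?_eq hxj
        (hX c (mem_of_getElem? hxj)) hij (hXij.trans hxj)
      obtain ⟨d, hyj⟩ : ∃ d, Y[j]? = some d := ⟨Y[j], getElem?_eq_getElem (hlen ▸ hjX)⟩
      have hYp : Y[p]? = Y[j]? := by
        have hencY := (prevEncAt_eq_of_prevEnc_eq h hjX).symm.trans hencX
        rw [hyj, ← getElem?_sub_of_prevEncAt_eq_inr hyj (hY d (mem_of_getElem? hyj)) hencY
          (by omega), Nat.sub_sub_self hpj.le]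
      rcases hip.eq_or_lt with rfl | hip
      · exact hYp
      · exact (ih p hpj hip.le (hXij.trans (hxj.trans hXp.symm))).trans hYp

theorem getElem?_eq_iff_of_prevEnc_eq (hX : ∀ c ∈ X, c ∉ Sig) (hY : ∀ c ∈ Y, c ∉ Sig)
    (h : prevEnc Sig X = prevEnc Sig Y) (i j : ℕ) : X[i]? = X[j]? ↔ Y[i]? = Y[j]? := by
  rcases le_total i j with hij | hji
  · exact ⟨getElem?_eq_of_prevEnc_eq hX hY h hij, getElem?_eq_of_prevEnc_eq hY hX h.symm hij⟩
  · rw [eq_comm, eq_comm (a := Y[i]?)]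
    exact ⟨getElem?_eq_of_prevEnc_eq hX hY h hji, getElem?_eq_of_prevEnc_eq hY hX h.symm hji⟩

end PrevEnc

theorem stmt7_general (Sig Par : Set α) [DecidablePred (· ∈ Sig)]
    (hdisj : Disjoint Sig Par)
    (X Y : List α) (hX : ∀ c ∈ X, c ∈ Par) (hY : ∀ c ∈ Y, c ∈ Par)
    (h : prevEnc Sig X = prevEnc Sig Y) :
    ∀ (i j : ℕ) (cxi cxj cyi cyj : α), X[i]? = some cxi → X[j]? = some cxj →
      Y[i]? = some cyi → Y[j]? = some cyj → (cxi = cxj ↔ cyi = cyj) := by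
  intro i j cxi cxj cyi cyj hxi hxj hyi hyj
  have hXSig : ∀ c ∈ X, c ∉ Sig := fun c hc => hdisj.notMem_of_mem_right (hX c hc)
  have hYSig : ∀ c ∈ Y, c ∉ Sig := fun c hc => hdisj.notMem_of_mem_right (hY c hc)
  simpa [hxi, hxj, hyi, hyj] using getElem?_eq_iff_of_prevEnc_eq hXSig hYSig h i j

theorem stmt7 (Sig Par : Set α) [DecidablePred (· ∈ Sig)]
    (hdisj : Disjoint Sig Par)
    (X Y : List α) (hX : ∀ c ∈ X, c ∈ Par) (hY : ∀ c ∈ Y, c ∈ Par)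
    (hlen : X.length = Y.length) (h : prevEnc Sig X = prevEnc Sig Y) :
    ∀ (i j : ℕ) (cxi cxj cyi cyj : α), X[i]? = some cxi → X[j]? = some cxj →
      Y[i]? = some cyi → Y[j]? = some cyj → (cxi = cxj ↔ cyi = cyj) :=
  stmt7_general Sig Par hdisj X Y hX hY h
end

section
/- Reversed suffix links are consistent with removing the first character: if node v of PPH(T) has rslink(a, v) = u, then for every p-string X with prev(X) = u, we have prev(X[2..|X|]) = v. -/
open List

variable {α : Type} [DecidableEq α]

/-!
Dropping the first character of `X` changes `prev(X)` only where an entry pointed at that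
character: the entry `i + 1` at position `i + 1` becomes `0`, and everything moves one place left.
A node of `PPH(T)` is a prefix of the previous encoding of a suffix of `T`, so none of its
entries points before its start. Hence for `u = a v` nothing is reset and `prev(X[2..]) = v`;
in the parameterized case `u` is `0 v` with the `0` at position `d` of `v` replaced by `d`,
and exactly this entry is reset to `0`, giving `v` again.
-/

def prevEncTail {β : Type} [DecidableEq β] (e : List (β ⊕ ℕ)) : List (β ⊕ ℕ) :=
  e.tail.mapIdx fun i x => if x = Sum.inr (i + 1) then Sum.inr 0 else x

/-- An entry `Sum.inr d` at position `i` of a previous encoding points back to position `i - d`. -/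
def BackRefsInRange {β : Type} (w : List (β ⊕ ℕ)) : Prop :=
  ∀ (i d : ℕ), w[i]? = some (Sum.inr d) → d ≤ i

section PrevEnc
variable (Sig : Set α) [DecidablePred (· ∈ Sig)]

lemma getElem?_prevEnc (S : List α) (i : ℕ) :
    (prevEnc Sig S)[i]? = if i < S.length then some (prevEncAt Sig S i) else none := by
  split_ifs with h <;> simp [prevEnc, h]

lemma prevEncAt_of_length_le {S : List α} {i : ℕ} (hi : S.length ≤ i) :
    prevEncAt Sig S i = Sum.inr 0 := by
  simp [prevEncAt, List.getElem?_eq_none hi]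

lemma prevEncAt_of_mem {S : List α} {i : ℕ} {c : α} (hi : S[i]? = some c) (hc : c ∈ Sig) :
    prevEncAt Sig S i = Sum.inl c := by
  simp [prevEncAt, hi, hc]

lemma prevEncAt_of_first_occurrence {S : List α} {i : ℕ} {c : α} (hi : S[i]? = some c)
    (hc : c ∉ Sig) (hfirst : ∀ k < i, S[k]? ≠ some c) :
    prevEncAt Sig S i = Sum.inr 0 := by
  simp only [prevEncAt, hi, hc, if_false]
  rw [if_neg]
  simpa using hfirst

lemma prevEncAt_of_last_occurrence {S : List α} {i j : ℕ} {c : α} (hi : S[i]? = some c)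
    (hc : c ∉ Sig) (hj : j < i) (hSj : S[j]? = some c)
    (hlast : ∀ k, j < k → k < i → S[k]? ≠ some c) :
    prevEncAt Sig S i = Sum.inr (i - j) := by
  have hgreatest : Nat.findGreatest (fun k => S[k]? = some c) (i - 1) = j :=
    Nat.findGreatest_eq_iff.mpr ⟨by omega, fun _ => hSj, fun k hjk hki => hlast k hjk (by omega)⟩
  simp only [prevEncAt, hi, hc, if_false, hgreatest]
  rw [if_pos (List.any_eq_true.mpr ⟨j, List.mem_range.mpr hj, decide_eq_true hSj⟩)]

lemma prevEncAt_le {S : List α} {i d : ℕ} (h : prevEncAt Sig S i = Sum.inr d) : d ≤ i := by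
  unfold prevEncAt at h
  split at h
  · cases h; omega
  · split_ifs at h <;> cases h <;> omega

lemma prevEncAt_drop_one (X : List α) (i : ℕ) :
    prevEncAt Sig (X.drop 1) i =
      if prevEncAt Sig X (i + 1) = Sum.inr (i + 1) then Sum.inr 0
      else prevEncAt Sig X (i + 1) := by
  have hdrop : ∀ k, (X.drop 1)[k]? = X[k + 1]? := fun k => by
    rw [List.getElem?_drop, Nat.add_comm]
  cases hi : X[i + 1]? with
  | none =>
    have hlen : X.length ≤ i + 1 := List.getElem?_eq_none_iff.mp hi
    rw [prevEncAt_of_length_le Sig (by simpa using hlen), prevEncAt_of_length_le Sig hlen]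
    simp
  | some c =>
    by_cases hc : c ∈ Sig
    · rw [prevEncAt_of_mem Sig ((hdrop i).trans hi) hc, prevEncAt_of_mem Sig hi hc]
      simp
    by_cases hocc : ∃ j < i + 1, X[j]? = some c
    · set j := Nat.findGreatest (fun k => X[k]? = some c) i
      obtain ⟨k, hk, hXk⟩ := hocc
      have hj : j ≤ i := Nat.findGreatest_le i
      have hXj : X[j]? = some c :=
        Nat.findGreatest_spec (P := fun k => X[k]? = some c) (by omega : k ≤ i) hXk
      have hlast : ∀ k, j < k → k < i + 1 → X[k]? ≠ some c := fun k hjk hki =>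
        Nat.findGreatest_is_greatest hjk (by omega)
      rw [prevEncAt_of_last_occurrence Sig hi hc (by omega) hXj hlast]
      rcases Nat.eq_zero_or_pos j with hj0 | hj0
      · -- the previous occurrence of `c` was the dropped first character
        rw [prevEncAt_of_first_occurrence Sig ((hdrop i).trans hi) hc fun k hk => by
          rw [hdrop]; exact hlast (k + 1) (by omega) (by omega)]
        simp [hj0]
      · rw [prevEncAt_of_last_occurrence Sig ((hdrop i).trans hi) hc (j := j - 1) (by omega)
          (by rw [hdrop, Nat.sub_add_cancel hj0]; exact hXj)
          fun k hjk hki => by rw [hdrop]; exact hlast (k + 1) (by omega) (by omega)]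
        rw [if_neg (by simp; omega)]
        congr 1
        omega
    · push Not at hocc
      rw [prevEncAt_of_first_occurrence Sig ((hdrop i).trans hi) hc fun k hk => by
          rw [hdrop]; exact hocc (k + 1) (by omega),
        prevEncAt_of_first_occurrence Sig hi hc hocc]
      simp

lemma prevEnc_drop_one (X : List α) :
    prevEnc Sig (X.drop 1) = prevEncTail (prevEnc Sig X) := by
  refine List.ext_getElem? fun i => ?_
  rw [prevEncTail, List.getElem?_mapIdx, List.getElem?_tail, getElem?_prevEnc, getElem?_prevEnc,
    prevEncAt_drop_one, List.length_drop]
  by_cases hi : i < X.length - 1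
  · simp [hi, show i + 1 < X.length by omega]
  · simp [hi, show ¬ i + 1 < X.length by omega]

lemma backRefsInRange_prevEnc (S : List α) :
    BackRefsInRange (prevEnc Sig S) := by
  intro i d h
  rw [getElem?_prevEnc] at h
  split_ifs at h
  exact prevEncAt_le Sig (Option.some_injective _ h)

end PrevEnc

lemma BackRefsInRange.take {β : Type} {w : List (β ⊕ ℕ)} (hw : BackRefsInRange w) (m : ℕ) :
    BackRefsInRange (w.take m) := by
  intro i d h
  rw [List.getElem?_take] at h
  split_ifs at h
  exact hw i d h

lemma BackRefsInRange.prevEncTail_cons {β : Type} [DecidableEq β] {w : List (β ⊕ ℕ)}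
    (hw : BackRefsInRange w) (a : β ⊕ ℕ) : prevEncTail (a :: w) = w := by
  refine List.mapIdx_eq_iff.mpr fun i => ?_
  rw [List.tail_cons]
  cases hi : w[i]? with
  | none => rfl
  | some x =>
    have hx : x ≠ Sum.inr (i + 1) := by
      rintro rfl
      exact absurd (hw i (i + 1) hi) (by omega)
    rw [Option.map_some, if_neg hx]

lemma BackRefsInRange.prevEncTail_cons_set {β : Type} [DecidableEq β] {w : List (β ⊕ ℕ)}
    (hw : BackRefsInRange w) (a : β ⊕ ℕ) {d : ℕ} (hd : w[d]? = some (Sum.inr 0)) :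
    prevEncTail (a :: w.set d (Sum.inr (d + 1))) = w := by
  have hself := hw.prevEncTail_cons a
  simp only [prevEncTail, List.tail_cons] at hself ⊢
  obtain ⟨hdlen, hwd⟩ := List.getElem?_eq_some_iff.mp hd
  rw [List.mapIdx_set, hself, if_pos rfl, ← hwd, List.set_getElem_self]

lemma mem_SHTNodes {β : Type} [DecidableEq β] {L : List (List β)} {x : List β}
    (hx : x ∈ SHTNodes L) : ∃ S ∈ L, ∃ m, x = S.take m := by
  suffices ∀ N : Finset (List β), x ∈ L.foldl (fun N S => insert (S.take (insLen N S)) N) N →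
      x ∈ N ∨ ∃ S ∈ L, ∃ m, x = S.take m by
    simpa using this ∅ hx
  clear hx
  induction L with
  | nil => exact fun N hx => Or.inl hx
  | cons S L ih =>
    intro N hx
    rcases ih _ hx with hx | ⟨S', hS', m, rfl⟩
    · rcases Finset.mem_insert.mp hx with rfl | hx
      · exact Or.inr ⟨S, List.mem_cons_self, _, rfl⟩
      · exact Or.inl hx
    · exact Or.inr ⟨S', List.mem_cons_of_mem S hS', m, rfl⟩

lemma backRefsInRange_of_mem_pphNodes (Sig : Set α) [DecidablePred (· ∈ Sig)] {T : List α}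
    {w : List (α ⊕ ℕ)} (hw : w ∈ pphNodes Sig T) : BackRefsInRange w := by
  obtain ⟨S, hS, m, rfl⟩ := mem_SHTNodes hw
  refine BackRefsInRange.take ?_ m
  simp only [pphSeq, List.mem_cons, List.mem_map] at hS
  rcases hS with rfl | ⟨k, -, rfl⟩
  · simp [BackRefsInRange]
  · exact backRefsInRange_prevEnc Sig _

lemma prevEncTail_of_rsLink (Sig : Set α) {n : ℕ} {N : Finset (List (α ⊕ ℕ))}
    (hN : ∀ w ∈ N, BackRefsInRange w) {a : α ⊕ ℕ} {v u : List (α ⊕ ℕ)}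
    (h : RSLink Sig n N a v u) : prevEncTail u = v := by
  obtain ⟨hv, -, ⟨-, rfl⟩ | ⟨d, -, hd, -, hvd, rfl⟩⟩ := h
  · exact (hN v hv).prevEncTail_cons a
  · have hdlen : d - 1 < v.length := (List.getElem?_eq_some_iff.mp hvd).1
    have hset :
        v.take (d - 1) ++ [Sum.inr d] ++ v.drop d = v.set (d - 1) (Sum.inr (d - 1 + 1)) := by
      rw [List.set_eq_take_append_cons_drop, if_pos hdlen, Nat.sub_add_cancel hd]
      simp
    rw [hset]
    exact (hN v hv).prevEncTail_cons_set _ hvd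

theorem stmt14_general (Sig Par : Set α) [DecidablePred (· ∈ Sig)] (T : List α)
    (a : α ⊕ ℕ) (v u : List (α ⊕ ℕ))
    (h : RSLink Sig T.length (pphNodes Sig T) a v u) :
    ∀ X : List α, (∀ c ∈ X, c ∈ Sig ∪ Par) → prevEnc Sig X = u →
      prevEnc Sig (X.drop 1) = v := by
  rintro X - rfl
  rw [prevEnc_drop_one]
  exact prevEncTail_of_rsLink Sig (fun w hw => backRefsInRange_of_mem_pphNodes Sig hw) h

theorem stmt14 (Sig Par : Set α) [DecidablePred (· ∈ Sig)]
    (hdisj : Disjoint Sig Par) (T : List α)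
    (a : α ⊕ ℕ) (v u : List (α ⊕ ℕ))
    (h : RSLink Sig T.length (pphNodes Sig T) a v u) :
    ∀ X : List α, (∀ c ∈ X, c ∈ Sig ∪ Par) → prevEnc Sig X = u →
      prevEnc Sig (X.drop 1) = v :=
  stmt14_general Sig Par T a v u h
end

section
/- Reversed suffix links are monotone along ancestors: suppose node v of PPH(T) has reversed suffix link rslink(a, v) and u is an ancestor of v (a proper prefix of v as a node). If a ∈ Σ ∪ {0}, then rslink(a, u) is defined. If a ∈ [1..n−1] and |u| ≥ a, then rslink(a, u) is defined; if a ∈ [1..n−1] and |u| < a, then rslink(0, u) is defined. -/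
open List

variable {α : Type} [DecidableEq α]

/-! The node set of a sequence hash tree is prefix-closed, because each step inserts the
shortest prefix that is not yet a node. When `u` is a prefix of `v`, the string that
`rslink(a, u)` (or `rslink(0, u)` if `|u| < a`) should be is a prefix of `rslink(a, v)`,
hence a node. -/

def PrefixClosed {β : Type} (N : Finset (List β)) : Prop :=
  ∀ ⦃u x : List β⦄, u <+: x → x ∈ N → u ∈ N

section SequenceHashTree

variable {β : Type} [DecidableEq β]

theorem take_mem_of_lt_insLen {N : Finset (List β)} {S : List β} {m : ℕ}
    (hm : m < insLen N S) (hmS : m ≤ S.length) : S.take m ∈ N := by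
  unfold insLen at hm
  rw [head?_filter] at hm
  cases hfind : (range (S.length + 1)).find? (fun m => decide (S.take m ∉ N)) with
  | none => simpa using find?_range_eq_none.1 hfind m (by omega)
  | some i =>
    rw [hfind, Option.getD_some] at hm
    simpa using (find?_range_eq_some.1 hfind).2.2 m hm

theorem PrefixClosed.insert_take_insLen {N : Finset (List β)} (hN : PrefixClosed N)
    (S : List β) : PrefixClosed (insert (S.take (insLen N S)) N) := by
  intro u x hux hx
  rw [Finset.mem_insert] at hx ⊢
  rcases hx with rfl | hx
  · have hu : u = S.take u.length := prefix_iff_eq_take.mp (hux.trans (take_prefix _ _))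
    have hle : u.length ≤ min (insLen N S) S.length := by simpa using hux.length_le
    rcases (hle.trans (min_le_left _ _)).lt_or_eq with hlt | heq
    · exact Or.inr (hu ▸ take_mem_of_lt_insLen hlt (hle.trans (min_le_right _ _)))
    · exact Or.inl (by rw [hu, heq])
  · exact Or.inr (hN hux hx)

theorem prefixClosed_SHTNodes (L : List (List β)) : PrefixClosed (SHTNodes L) := by
  suffices ∀ N : Finset (List β), PrefixClosed N →
      PrefixClosed (L.foldl (fun N S => insert (S.take (insLen N S)) N) N) from
    this ∅ fun _ _ _ hx => absurd hx (Finset.notMem_empty _)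
  induction L with
  | nil => exact fun _ hN => hN
  | cons S L ih => exact fun N hN => ih _ (hN.insert_take_insLen S)

end SequenceHashTree

theorem prefixClosed_pphNodes (Sig : Set α) [DecidablePred (· ∈ Sig)] (T : List α) :
    PrefixClosed (pphNodes Sig T) :=
  prefixClosed_SHTNodes _

section RSLink

omit [DecidableEq α]

variable {Sig : Set α} {n : ℕ} {N : Finset (List (α ⊕ ℕ))} {a : α ⊕ ℕ} {d : ℕ}
  {u v w : List (α ⊕ ℕ)}

theorem not_staticOrZero_inr (hd : 1 ≤ d) : ¬StaticOrZero Sig (Sum.inr d) := by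
  rintro (⟨c, -, hc⟩ | hc) <;> simp_all

theorem RSLink.eq_cons (h : RSLink Sig n N a v w) (ha : StaticOrZero Sig a) : w = a :: v := by
  obtain ⟨-, -, ⟨-, hw⟩ | ⟨d, rfl, hd, -⟩⟩ := h
  · exact hw
  · exact absurd ha (not_staticOrZero_inr hd)

theorem RSLink.eq_param (h : RSLink Sig n N (Sum.inr d) v w) (hd : 1 ≤ d) :
    d ≤ n - 1 ∧ v[d - 1]? = some (Sum.inr 0) ∧
      w = Sum.inr 0 :: (v.take (d - 1) ++ [Sum.inr d] ++ v.drop d) := by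
  obtain ⟨-, -, ⟨ha, -⟩ | ⟨d', hd', -, hdn, hv, hw⟩⟩ := h
  · exact absurd ha (not_staticOrZero_inr hd)
  · obtain rfl : d = d' := Sum.inr_injective hd'
    exact ⟨hdn, hv, hw⟩

variable (hN : PrefixClosed N) (h : RSLink Sig n N a v w) (hu : u <+: v)
include hN h hu

theorem RSLink.of_prefix_of_staticOrZero (ha : StaticOrZero Sig a) :
    RSLink Sig n N a u (a :: u) :=
  ⟨hN hu h.1, hN (cons_prefix_cons.2 ⟨rfl, hu⟩) (h.eq_cons ha ▸ h.2.1), Or.inl ⟨ha, rfl⟩⟩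

theorem RSLink.of_prefix_of_le (ha : a = Sum.inr d) (hd : 1 ≤ d) (hdu : d ≤ u.length) :
    RSLink Sig n N a u (Sum.inr 0 :: (u.take (d - 1) ++ [Sum.inr d] ++ u.drop d)) := by
  subst ha
  obtain ⟨hdn, hv, hw⟩ := h.eq_param hd
  obtain ⟨t, rfl⟩ := hu
  refine ⟨hN (prefix_append u t) h.1, hN ?_ (hw ▸ h.2.1), Or.inr ⟨d, rfl, hd, hdn, ?_, rfl⟩⟩
  · rw [take_append_of_le_length (by omega), drop_append_of_le_length hdu]
    exact ⟨t, by simp⟩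
  · rwa [getElem?_append_left (by omega)] at hv

theorem RSLink.zero_of_prefix_of_lt (ha : a = Sum.inr d) (hd : 1 ≤ d) (hud : u.length < d) :
    RSLink Sig n N (Sum.inr 0) u (Sum.inr 0 :: u) := by
  subst ha
  obtain ⟨-, -, hw⟩ := h.eq_param hd
  have hpre : Sum.inr 0 :: u <+: w := by
    rw [hw, cons_prefix_cons, append_assoc]
    exact ⟨rfl, (prefix_take_iff.2 ⟨hu, by omega⟩).trans (prefix_append _ _)⟩
  exact ⟨hN hu h.1, hN hpre h.2.1, Or.inl ⟨Or.inr rfl, rfl⟩⟩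

end RSLink

theorem stmt15_general (Sig : Set α) [DecidablePred (· ∈ Sig)] (T : List α)
    (a : α ⊕ ℕ) (v w u : List (α ⊕ ℕ))
    (h : RSLink Sig T.length (pphNodes Sig T) a v w)
    (hu : u <+: v) :
    (StaticOrZero Sig a → ∃ w', RSLink Sig T.length (pphNodes Sig T) a u w') ∧
    (∀ d : ℕ, a = Sum.inr d → 1 ≤ d → d ≤ T.length - 1 →
      (d ≤ u.length → ∃ w', RSLink Sig T.length (pphNodes Sig T) a u w') ∧
      (u.length < d →
        ∃ w', RSLink Sig T.length (pphNodes Sig T) (Sum.inr 0) u w')) := by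
  have hN := prefixClosed_pphNodes Sig T
  refine ⟨fun ha => ⟨_, h.of_prefix_of_staticOrZero hN hu ha⟩,
    fun d ha hd _ => ⟨fun hdu => ⟨_, h.of_prefix_of_le hN hu ha hd hdu⟩,
      fun hud => ⟨_, h.zero_of_prefix_of_lt hN hu ha hd hud⟩⟩⟩

theorem stmt15 (Sig : Set α) [DecidablePred (· ∈ Sig)] (T : List α)
    (a : α ⊕ ℕ) (v w u : List (α ⊕ ℕ))
    (h : RSLink Sig T.length (pphNodes Sig T) a v w)
    (hu : u <+: v) (hne : u ≠ v) :
    (StaticOrZero Sig a → ∃ w', RSLink Sig T.length (pphNodes Sig T) a u w') ∧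
    (∀ d : ℕ, a = Sum.inr d → 1 ≤ d → d ≤ T.length - 1 →
      (d ≤ u.length → ∃ w', RSLink Sig T.length (pphNodes Sig T) a u w') ∧
      (u.length < d →
        ∃ w', RSLink Sig T.length (pphNodes Sig T) (Sum.inr 0) u w')) :=
  stmt15_general Sig T a v w u h hu
end
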